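/- Let I be a finite nonempty index set and let {X_i}_{i∈I} and {Y_i}_{i∈I} be two independent integrable random fields (the collection (X_i)_{i∈I} is independent of the collection (Y_i)_{i∈I}) with E[Y_i] = 0 for every i ∈ I. Then E[max_{i∈I} (X_i + Y_i)] ≥ E[max_{i∈I} X_i]. -/
import Mathlib
open MeasureTheory ProbabilityTheory

lemma abs_sup'_le_sum_abs {n : Type*} [Fintype n] [Nonempty n] (a : n → ℝ) :
    |Finset.univ.sup' Finset.univ_nonempty a| ≤ ∑ i, |a i| := by
  rw [abs_le]
  constructor
  · obtain ⟨i⟩ := ‹Nonempty n›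
    have h1 : |a i| ≤ ∑ j, |a j| :=
      Finset.single_le_sum (f := fun j => |a j|) (fun j _ => abs_nonneg (a j))
        (Finset.mem_univ i)
    have h2 : a i ≤ Finset.univ.sup' Finset.univ_nonempty a :=
      Finset.le_sup' a (Finset.mem_univ i)
    linarith [neg_abs_le (a i)]
  · refine Finset.sup'_le _ _ fun i _ => ?_
    exact (le_abs_self _).trans (Finset.single_le_sum (f := fun j => |a j|)
      (fun j _ => abs_nonneg (a j)) (Finset.mem_univ i))

/-- **Lemma 1 of the paper.** If `(X_i)_{i ∈ I}` and `(Y_i)_{i ∈ I}` are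
two independent integrable random fields indexed by a finite nonempty set `I`, and each
`Y_i` is centered, then `E[max_i (X_i + Y_i)] ≥ E[max_i X_i]`. -/
theorem expected_max_add_centered_indep_ge
    {Ω : Type*} [MeasurableSpace Ω] (μ : Measure Ω) [IsProbabilityMeasure μ]
    {I : Type*} [Fintype I] [Nonempty I]
    (X Y : I → Ω → ℝ)
    (hXmeas : ∀ i, Measurable (X i)) (hYmeas : ∀ i, Measurable (Y i))
    (hXint : ∀ i, Integrable (X i) μ) (hYint : ∀ i, Integrable (Y i) μ)
    (hindep : IndepFun (fun ω (i : I) => X i ω) (fun ω (i : I) => Y i ω) μ)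
    (hY0 : ∀ i, ∫ ω, Y i ω ∂μ = 0) :
    ∫ ω, Finset.univ.sup' Finset.univ_nonempty (fun i => X i ω) ∂μ ≤
      ∫ ω, Finset.univ.sup' Finset.univ_nonempty (fun i => X i ω + Y i ω) ∂μ := by
  classical
  set X' : Ω → I → ℝ := fun ω i => X i ω with hX'
  set Y' : Ω → I → ℝ := fun ω i => Y i ω with hY'
  have hmX : Measurable X' := measurable_pi_lambda _ fun i => hXmeas i
  have hmY : Measurable Y' := measurable_pi_lambda _ fun i => hYmeas i
  set νX := μ.map X' with hνX
  set νY := μ.map Y' with hνY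
  have : IsProbabilityMeasure νX := Measure.isProbabilityMeasure_map hmX.aemeasurable
  have : IsProbabilityMeasure νY := Measure.isProbabilityMeasure_map hmY.aemeasurable
  set f : (I → ℝ) × (I → ℝ) → ℝ :=
    fun p => Finset.univ.sup' Finset.univ_nonempty (fun i => p.1 i + p.2 i) with hf
  set g : (I → ℝ) → ℝ := fun x => Finset.univ.sup' Finset.univ_nonempty (fun i => x i) with hg
  have hfm : Measurable f := by
    have : f = Finset.univ.sup' Finset.univ_nonempty
        (fun i (p : (I → ℝ) × (I → ℝ)) => p.1 i + p.2 i) := by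
      ext p; rw [Finset.sup'_apply]
    rw [this]
    exact Finset.measurable_sup' _ fun i _ =>
      ((measurable_pi_apply i).comp measurable_fst).add
        ((measurable_pi_apply i).comp measurable_snd)
  have hgm : Measurable g := by
    have : g = Finset.univ.sup' Finset.univ_nonempty (fun i (x : I → ℝ) => x i) := by
      ext x; rw [Finset.sup'_apply]
    rw [this]
    exact Finset.measurable_sup' _ fun i _ => measurable_pi_apply i
  -- integrability of the max of X_i + Y_i
  have hintXY : Integrable (fun ω => f (X' ω, Y' ω)) μ := by
    refine Integrable.mono' (g := fun ω => ∑ i, |X i ω + Y i ω|)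
      (integrable_finset_sum _ fun i _ => ((hXint i).add (hYint i)).abs)
      ((hfm.comp (hmX.prodMk hmY)).aestronglyMeasurable) ?_
    filter_upwards with ω
    simpa [Real.norm_eq_abs] using abs_sup'_le_sum_abs (fun i => X i ω + Y i ω)
  have hlaw : μ.map (fun ω => (X' ω, Y' ω)) = νX.prod νY :=
    (indepFun_iff_map_prod_eq_prod_map_map hmX.aemeasurable hmY.aemeasurable).mp hindep
  have hF : Integrable f (νX.prod νY) := by
    rw [← hlaw]
    rwa [integrable_map_measure hfm.aestronglyMeasurable (hmX.prodMk hmY).aemeasurable]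
  -- coordinate integrability over νY and its integral
  have hYi : ∀ i, Integrable (fun y : I → ℝ => y i) νY := by
    intro i
    rw [hνY, integrable_map_measure (measurable_pi_apply i).aestronglyMeasurable hmY.aemeasurable]
    exact hYint i
  have hYi0 : ∀ i, ∫ y, y i ∂νY = 0 := by
    intro i
    rw [hνY, integral_map hmY.aemeasurable (measurable_pi_apply i).aestronglyMeasurable]
    exact hY0 i
  -- RHS rewrite
  have hRHS : ∫ ω, Finset.univ.sup' Finset.univ_nonempty (fun i => X i ω + Y i ω) ∂μ
      = ∫ x, ∫ y, f (x, y) ∂νY ∂νX := by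
    calc ∫ ω, Finset.univ.sup' Finset.univ_nonempty (fun i => X i ω + Y i ω) ∂μ
        = ∫ ω, f (X' ω, Y' ω) ∂μ := rfl
      _ = ∫ p, f p ∂(μ.map (fun ω => (X' ω, Y' ω))) :=
          (integral_map (hmX.prodMk hmY).aemeasurable hfm.aestronglyMeasurable).symm
      _ = ∫ p, f p ∂(νX.prod νY) := by rw [hlaw]
      _ = ∫ x, ∫ y, f (x, y) ∂νY ∂νX := integral_prod f hF
  have hLHS : ∫ ω, Finset.univ.sup' Finset.univ_nonempty (fun i => X i ω) ∂μ
      = ∫ x, g x ∂νX := by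
    rw [hνX, integral_map hmX.aemeasurable hgm.aestronglyMeasurable]
  rw [hLHS, hRHS]
  have hgint : Integrable g νX := by
    rw [hνX, integrable_map_measure hgm.aestronglyMeasurable hmX.aemeasurable]
    refine Integrable.mono' (g := fun ω => ∑ i, |X i ω|)
      (integrable_finset_sum _ fun i _ => (hXint i).abs)
      ((hgm.comp hmX).aestronglyMeasurable) ?_
    filter_upwards with ω
    simpa [Real.norm_eq_abs] using abs_sup'_le_sum_abs (fun i => X i ω)
  refine integral_mono_ae hgint hF.integral_prod_left ?_
  filter_upwards [hF.prod_right_ae] with x hx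
  refine Finset.sup'_le _ _ fun i _ => ?_
  have : x i = ∫ y, (x i + y i) ∂νY := by
    rw [integral_add (integrable_const _) (hYi i), hYi0 i, integral_const]
    simp
  rw [this]
  refine integral_mono ((integrable_const _).add (hYi i)) hx fun y => ?_
  exact Finset.le_sup' (fun j => x j + y j) (Finset.mem_univ i)
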